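/- arXiv:1406.0544 — 2 statements merged into one kernel-verified Lean document; each statement's English description precedes it below -/
import Mathlib

section
/- Let (G,P,Δ) be a Garside structure of finite type. Suppose X = X₁·…·X_n is a product of simple elements in right normal form and Y = Y₁·…·Y_m is a product of simple elements in left normal form. If Δ ≼ XY, then Δ ≼ X_n Y₁. -/
/-- A Garside structure `(G, P, Δ)` on a group `G`: `P` is the submonoid of positive
elements, `Δ` the Garside element.  The axioms (G1)-(G4) are stated below:
the prefix relation `a ≼ b ⟺ a⁻¹b ∈ P` is a lattice order (with gcd `wedge` and
lcm `vee`), the simple elements `[1,Δ]` generate `G`, conjugation by `Δ` preserves `P`,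
and every nontrivial positive element has finite letter length. -/
structure GarsideStructure (G : Type*) [Group G] where
  P : Set G
  one_mem : (1 : G) ∈ P
  mul_mem : ∀ {a b : G}, a ∈ P → b ∈ P → a * b ∈ P
  inter_inv : ∀ a : G, a ∈ P → a⁻¹ ∈ P → a = 1
  Δ : G
  Δ_mem : Δ ∈ P
  wedge : G → G → G
  vee : G → G → G
  wedge_le_left : ∀ a b : G, (wedge a b)⁻¹ * a ∈ P
  wedge_le_right : ∀ a b : G, (wedge a b)⁻¹ * b ∈ P
  le_wedge : ∀ a b c : G, c⁻¹ * a ∈ P → c⁻¹ * b ∈ P → c⁻¹ * wedge a b ∈ P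
  le_vee_left : ∀ a b : G, a⁻¹ * vee a b ∈ P
  le_vee_right : ∀ a b : G, b⁻¹ * vee a b ∈ P
  vee_le : ∀ a b c : G, a⁻¹ * c ∈ P → b⁻¹ * c ∈ P → (vee a b)⁻¹ * c ∈ P
  simples_generate : Subgroup.closure {a : G | a ∈ P ∧ a⁻¹ * Δ ∈ P} = ⊤
  conj_mem : ∀ a : G, a ∈ P → Δ⁻¹ * a * Δ ∈ P
  len_bdd : ∀ X : G, X ∈ P → X ≠ 1 →
    BddAbove {k : ℕ | ∃ w : List G, w.length = k ∧ (∀ a ∈ w, a ∈ P ∧ a ≠ 1) ∧ w.prod = X}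

namespace GarsideStructure

variable {G : Type*} [Group G] (S : GarsideStructure G)

/-- The prefix order `a ≼ b`. -/
def le (a b : G) : Prop := a⁻¹ * b ∈ S.P

/-- Strict prefix order `a ≺ b`. -/
def lt (a b : G) : Prop := S.le a b ∧ a ≠ b

/-- The suffix relation `a ≽ b ⟺ ab⁻¹ ∈ P`. -/
def ges (a b : G) : Prop := a * b⁻¹ ∈ S.P

/-- Simple elements: the interval `[1, Δ]`. -/
def IsSimple (a : G) : Prop := a ∈ S.P ∧ S.le a S.Δ

/-- Atoms: elements of `P \ {1}` that are not products of two elements of `P \ {1}`. -/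
def IsAtom' (a : G) : Prop := a ∈ S.P ∧ a ≠ 1 ∧
  ¬ ∃ b c : G, b ∈ S.P ∧ b ≠ 1 ∧ c ∈ S.P ∧ c ≠ 1 ∧ a = b * c

/-- The letter length `‖X‖` of a positive element. -/
noncomputable def norm (X : G) : ℕ :=
  sSup {k : ℕ | ∃ w : List G, w.length = k ∧ (∀ a ∈ w, a ∈ S.P ∧ a ≠ 1) ∧ w.prod = X}

/-- Finite type: finitely many simple elements. -/
def FiniteType : Prop := {a : G | S.IsSimple a}.Finite

/-- Homogeneous: the letter length is additive on `P`. -/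
def Homogeneous : Prop := ∀ X ∈ S.P, ∀ Y ∈ S.P, S.norm (X * Y) = S.norm X + S.norm Y

/-- Symmetric: for simple `u, v`, `u ≼ v ⟺ v ≽ u`. -/
def IsSymmetric : Prop := ∀ u v : G, S.IsSimple u → S.IsSimple v → (S.le u v ↔ S.ges v u)

/-- Square free: no simple element contains the square of an atom. -/
def SquareFree : Prop := ∀ a : G, S.IsSimple a →
  ¬ ∃ U x V : G, U ∈ S.P ∧ S.IsAtom' x ∧ V ∈ S.P ∧ a = U * x ^ 2 * V

/-- The right complement `∂A = A⁻¹Δ`. -/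
def dl (A : G) : G := A⁻¹ * S.Δ

/-- `τ(X) = Δ⁻¹XΔ`. -/
def tau (X : G) : G := S.Δ⁻¹ * X * S.Δ

/-- The product `A·B` of simple elements is left weighted if `A = (AB) ∧ Δ`. -/
def LeftWeighted (A B : G) : Prop := A = S.wedge (A * B) S.Δ

/-- The gcd for the suffix order `≽` (derived from the lcm for `≼`). -/
def rwedge (a b : G) : G := (S.vee a⁻¹ b⁻¹)⁻¹

/-- The product `A·B` of simple elements is right weighted if `B = (AB) ∧̃ Δ`. -/
def RightWeighted (A B : G) : Prop := B = S.rwedge (A * B) S.Δ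

end GarsideStructure

/-!
Peel `Y` off from the right: if `Δ ≼ u x` with `u, x` positive, then `u⁻¹ (u ∨ Δ)` is a common
prefix of `x` and `Δ`, so `Δ ≼ u (x ∧ Δ)`, and for `x = Yᵢ Yᵢ₊₁` left weightedness says
`x ∧ Δ = Yᵢ`.
Then peel `X` off from the left by the mirror argument in the suffix order. Passing between
`Δ ≼ z` and `z ≽ Δ` needs `Δ P Δ⁻¹ ⊆ P`, which holds in finite type: `τ` permutes the finite set
of simple elements, and `P` is the monoid generated by the simple elements, because every `g`
has some `g Δᵏ` in that monoid and a simple prefix, such as `Δ`, can be split off a product of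
simple elements.
-/

namespace GarsideStructure

variable {G : Type*} [Group G] (S : GarsideStructure G)

def positiveSubmonoid : Submonoid G where
  carrier := S.P
  mul_mem' := S.mul_mem
  one_mem' := S.one_mem

def simpleClosure : Submonoid G := Submonoid.closure {a | S.IsSimple a}

section Order

variable {S}

lemma le_trans {a b c : G} (hab : S.le a b) (hbc : S.le b c) : S.le a c := by
  simpa [le, mul_assoc] using S.mul_mem hab hbc

lemma le_mul_right (a : G) {p : G} (hp : p ∈ S.P) : S.le a (a * p) := by
  simpa [le] using hp

lemma mul_le_mul_iff_left (c : G) {a b : G} : S.le (c * a) (c * b) ↔ S.le a b := by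
  simp [le, mul_assoc]

lemma Δ_le_mul_Δ {u : G} (hu : u ∈ S.P) : S.le S.Δ (u * S.Δ) := by
  simpa [le, mul_assoc] using S.conj_mem u hu

lemma IsSimple.le_mul_Δ {a b : G} (ha : S.IsSimple a) (hb : b ∈ S.P) : S.le a (b * S.Δ) :=
  le_trans ha.2 (Δ_le_mul_Δ hb)

lemma isSimple_inv_mul_of_le {t c : G} (h₁ : S.le t c) (h₂ : S.le c (t * S.Δ)) :
    S.IsSimple (t⁻¹ * c) :=
  ⟨h₁, by simpa [le, mul_assoc] using h₂⟩

lemma ges_trans {a b c : G} (hab : S.ges a b) (hbc : S.ges b c) : S.ges a c := by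
  simpa [ges, mul_assoc] using S.mul_mem hab hbc

lemma mul_ges_mul_iff_right (c : G) {a b : G} : S.ges (a * c) (b * c) ↔ S.ges a b := by
  simp [ges, mul_assoc]

lemma ges_mul_left (a : G) {p : G} (hp : p ∈ S.P) : S.ges (p * a) a := by
  simpa [ges] using hp

lemma ges_rwedge {a b c : G} (ha : S.ges a c) (hb : S.ges b c) : S.ges (S.rwedge a b) c := by
  simpa [ges, rwedge] using S.vee_le a⁻¹ b⁻¹ c⁻¹ (by rwa [inv_inv]) (by rwa [inv_inv])

end Order

lemma isSimple_Δ : S.IsSimple S.Δ :=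
  ⟨S.Δ_mem, by simpa [le] using S.one_mem⟩

lemma isSimple_dl {a : G} (ha : S.IsSimple a) : S.IsSimple (S.dl a) :=
  ⟨ha.2, by simpa [dl, le, mul_assoc] using S.conj_mem a ha.1⟩

lemma isSimple_tau {a : G} (ha : S.IsSimple a) : S.IsSimple (S.tau a) :=
  ⟨S.conj_mem a ha.1, by simpa [tau, le, mul_assoc] using S.conj_mem _ ha.2⟩

/-- `τ` is injective on the finite set of simple elements, hence also surjective onto it. -/
lemma isSimple_conj_Δ (hft : S.FiniteType) {a : G} (ha : S.IsSimple a) :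
    S.IsSimple (S.Δ * a * S.Δ⁻¹) := by
  have hinj : Set.InjOn S.tau {x | S.IsSimple x} := fun x _ y _ hxy => by
    simpa [tau] using hxy
  obtain ⟨b, hb, rfl⟩ :=
    ((hft.injOn_iff_bijOn_of_mapsTo fun _ => S.isSimple_tau).mp hinj).surjOn ha
  simpa [tau, mul_assoc] using hb

lemma mem_simpleClosure_of_isSimple {a : G} (ha : S.IsSimple a) : a ∈ S.simpleClosure :=
  Submonoid.subset_closure ha

lemma simpleClosure_le_positiveSubmonoid : S.simpleClosure ≤ S.positiveSubmonoid :=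
  Submonoid.closure_le.mpr fun _ ha => ha.1

lemma map_mem_simpleClosure {f : G →* G} (hf : ∀ a, S.IsSimple a → S.IsSimple (f a)) {x : G}
    (hx : x ∈ S.simpleClosure) : f x ∈ S.simpleClosure :=
  (Submonoid.closure_le (S := S.simpleClosure.comap f)).mpr
    (fun a ha => Submonoid.subset_closure (hf a ha)) hx

lemma tau_mem_simpleClosure {x : G} (hx : x ∈ S.simpleClosure) : S.tau x ∈ S.simpleClosure := by
  simpa [tau] using S.map_mem_simpleClosure (f := (MulAut.conj S.Δ⁻¹).toMonoidHom)
    (fun a ha => by simpa [tau] using S.isSimple_tau ha) hx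

lemma conj_Δ_mem_simpleClosure (hft : S.FiniteType) {x : G} (hx : x ∈ S.simpleClosure) :
    S.Δ * x * S.Δ⁻¹ ∈ S.simpleClosure := by
  simpa using S.map_mem_simpleClosure (f := (MulAut.conj S.Δ).toMonoidHom)
    (fun a ha => by simpa using S.isSimple_conj_Δ hft ha) hx

/-- Inverses of simple generators cost one factor `Δ`: `x⁻¹ = ∂x · Δ⁻¹` with `∂x` simple. -/
lemma exists_mul_Δ_pow_mem_simpleClosure (g : G) : ∃ k : ℕ, g * S.Δ ^ k ∈ S.simpleClosure := by
  have hg : g ∈ Subgroup.closure {a | S.IsSimple a} := S.simples_generate ▸ Subgroup.mem_top g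
  induction hg using Subgroup.closure_induction_left with
  | one => exact ⟨0, by simp⟩
  | mul_left x hx y _ ih =>
    obtain ⟨k, hk⟩ := ih
    exact ⟨k, by
      simpa [mul_assoc] using S.simpleClosure.mul_mem (S.mem_simpleClosure_of_isSimple hx) hk⟩
  | inv_mul_cancel x hx y _ ih =>
    obtain ⟨k, hk⟩ := ih
    refine ⟨k + 1, ?_⟩
    convert S.simpleClosure.mul_mem (S.mem_simpleClosure_of_isSimple (S.isSimple_dl hx))
      (S.tau_mem_simpleClosure hk) using 1
    simp only [dl, tau, pow_succ]
    group

lemma inv_mul_mem_simpleClosure_of_le {a p : G} (ha : S.IsSimple a)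
    (hp : p ∈ S.simpleClosure) (hle : S.le a p) : a⁻¹ * p ∈ S.simpleClosure := by
  induction hp using Submonoid.closure_induction_left generalizing a with
  | one =>
    rw [S.inter_inv a ha.1 (by simpa [le] using hle)]
    simp
  | mul_left t ht q hq ih =>
    have hqP : q ∈ S.P := S.simpleClosure_le_positiveSubmonoid hq
    have hvee_t : S.IsSimple (t⁻¹ * S.vee a t) := isSimple_inv_mul_of_le (S.le_vee_right a t)
      (S.vee_le _ _ _ (ha.le_mul_Δ ht.1) (le_mul_right t S.Δ_mem))
    have hvee_a : S.IsSimple (a⁻¹ * S.vee a t) := isSimple_inv_mul_of_le (S.le_vee_left a t)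
      (S.vee_le _ _ _ (le_mul_right a S.Δ_mem) (IsSimple.le_mul_Δ ht ha.1))
    have hle_q : S.le (t⁻¹ * S.vee a t) q := by
      rw [← mul_le_mul_iff_left t, mul_inv_cancel_left]
      exact S.vee_le _ _ _ hle (le_mul_right t hqP)
    convert S.simpleClosure.mul_mem (S.mem_simpleClosure_of_isSimple hvee_a) (ih hvee_t hle_q)
      using 1
    group

lemma mem_simpleClosure_of_mem (hft : S.FiniteType) {p : G} (hp : p ∈ S.P) :
    p ∈ S.simpleClosure := by
  obtain ⟨k, hk⟩ := S.exists_mul_Δ_pow_mem_simpleClosure p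
  induction k with
  | zero => simpa using hk
  | succ k ih =>
    have hle : S.le S.Δ (p * S.Δ ^ (k + 1)) := by
      rw [pow_succ', ← mul_assoc]
      exact le_trans (Δ_le_mul_Δ hp) (le_mul_right _ (S.positiveSubmonoid.pow_mem S.Δ_mem k))
    apply ih
    convert S.conj_Δ_mem_simpleClosure hft
      (S.inv_mul_mem_simpleClosure_of_le S.isSimple_Δ hk hle) using 1
    rw [pow_succ]
    group

lemma conj_Δ_mem (hft : S.FiniteType) {p : G} (hp : p ∈ S.P) : S.Δ * p * S.Δ⁻¹ ∈ S.P :=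
  S.simpleClosure_le_positiveSubmonoid
    (S.conj_Δ_mem_simpleClosure hft (S.mem_simpleClosure_of_mem hft hp))

lemma le_Δ_iff_ges_Δ (hft : S.FiniteType) {x : G} : S.le S.Δ x ↔ S.ges x S.Δ := by
  constructor
  · intro h
    simpa [ges, le, mul_assoc] using S.conj_Δ_mem hft h
  · intro h
    simpa [ges, le, mul_assoc] using S.conj_mem _ h

lemma le_mul_wedge_Δ {u x : G} (hu : u ∈ S.P) (hx : x ∈ S.P) (h : S.le S.Δ (u * x)) :
    S.le S.Δ (u * S.wedge x S.Δ) := by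
  have hcx : S.le (u⁻¹ * S.vee u S.Δ) x := by
    rw [← mul_le_mul_iff_left u, mul_inv_cancel_left]
    exact S.vee_le _ _ _ (le_mul_right u hx) h
  have hcΔ : S.le (u⁻¹ * S.vee u S.Δ) S.Δ := by
    rw [← mul_le_mul_iff_left u, mul_inv_cancel_left]
    exact S.vee_le _ _ _ (le_mul_right u S.Δ_mem) (Δ_le_mul_Δ hu)
  have hc : S.le (u⁻¹ * S.vee u S.Δ) (S.wedge x S.Δ) := S.le_wedge _ _ _ hcx hcΔ
  rw [← mul_le_mul_iff_left u, mul_inv_cancel_left] at hc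
  exact le_trans (S.le_vee_right u S.Δ) hc

/-- Mirror image of `le_mul_wedge_Δ` for the suffix order; `L` is the suffix-lcm of `Δ` and `v`. -/
lemma le_rwedge_Δ_mul (hft : S.FiniteType) {x v : G} (hx : x ∈ S.P) (hv : v ∈ S.P)
    (h : S.le S.Δ (x * v)) : S.le S.Δ (S.rwedge x S.Δ * v) := by
  set L := (S.wedge S.Δ⁻¹ v⁻¹)⁻¹
  have hLΔ : S.ges L S.Δ := by simpa [ges, L] using S.wedge_le_left S.Δ⁻¹ v⁻¹
  have ges_L : ∀ z, S.ges z S.Δ → S.ges z v → S.ges (z * v⁻¹) (L * v⁻¹) := fun z h₁ h₂ => by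
    rw [mul_ges_mul_iff_right]
    simpa [ges, L] using S.le_wedge S.Δ⁻¹ v⁻¹ z⁻¹ (by rwa [inv_inv]) (by rwa [inv_inv])
  have hΔ : S.ges S.Δ (L * v⁻¹) := by
    simpa using ges_L (S.Δ * v) (by simpa [ges] using S.conj_Δ_mem hft hv) (ges_mul_left v S.Δ_mem)
  have hx' : S.ges x (L * v⁻¹) := by
    simpa using ges_L (x * v) ((S.le_Δ_iff_ges_Δ hft).mp h) (ges_mul_left v hx)
  have := (mul_ges_mul_iff_right v).mpr (ges_rwedge hx' hΔ)
  rw [inv_mul_cancel_right] at this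
  exact (S.le_Δ_iff_ges_Δ hft).mpr (ges_trans this hLΔ)

lemma le_mul_head_of_isChain_leftWeighted {u y : G} {l : List G} (hu : u ∈ S.P)
    (hl : ∀ a ∈ y :: l, a ∈ S.P) (hw : List.IsChain S.LeftWeighted (y :: l))
    (h : S.le S.Δ (u * (y :: l).prod)) : S.le S.Δ (u * y) := by
  induction l generalizing u y with
  | nil => simpa using h
  | cons z l ih =>
    obtain ⟨hyz, hw⟩ := List.isChain_cons_cons.mp hw
    have hz := ih (S.mul_mem hu (hl y (by simp))) (fun a ha => hl a (by simp_all)) hw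
      (by simpa [mul_assoc] using h)
    rw [hyz]
    exact S.le_mul_wedge_Δ hu (S.mul_mem (hl y (by simp)) (hl z (by simp)))
      (by simpa [mul_assoc] using hz)

lemma le_getLast_mul_of_isChain_rightWeighted (hft : S.FiniteType) {l : List G} (hne : l ≠ [])
    {v : G} (hv : v ∈ S.P) (hl : ∀ a ∈ l, a ∈ S.P) (hw : List.IsChain S.RightWeighted l)
    (h : S.le S.Δ (l.prod * v)) : S.le S.Δ (l.getLast hne * v) := by
  induction l with
  | nil => contradiction
  | cons A l ih =>
    cases l with
    | nil => simpa using h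
    | cons B l =>
      obtain ⟨hAB, hw⟩ := List.isChain_cons_cons.mp hw
      have hB := S.le_rwedge_Δ_mul hft (S.mul_mem (hl A (by simp)) (hl B (by simp)))
        (S.mul_mem (S.positiveSubmonoid.list_prod_mem (l := l) fun a ha => hl a (by simp [ha])) hv)
        (by simpa [mul_assoc] using h)
      rw [← hAB] at hB
      rw [List.getLast_cons (List.cons_ne_nil _ _)]
      exact ih (List.cons_ne_nil _ _) (fun a ha => hl a (List.mem_cons_of_mem _ ha)) hw
        (by simpa [mul_assoc] using hB)

end GarsideStructure

/-- **Lemma 2.4** (Orevkov): if `X = X₁ ⋯ X_n` is a product of simple elements in right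
normal form, `Y = Y₁ ⋯ Y_m` is a product of simple elements in left normal form, and
`Δ ≼ XY`, then `Δ ≼ X_n Y₁`. -/
theorem statement5 {G : Type*} [Group G] (S : GarsideStructure G) (hft : S.FiniteType)
    (Xs Ys : List G) (hXne : Xs ≠ []) (hYne : Ys ≠ [])
    (hXsimple : ∀ a ∈ Xs, S.IsSimple a) (hYsimple : ∀ a ∈ Ys, S.IsSimple a)
    (hXw : List.Chain' S.RightWeighted Xs) (hYw : List.Chain' S.LeftWeighted Ys)
    (h : S.le S.Δ (Xs.prod * Ys.prod)) :
    S.le S.Δ (Xs.getLast hXne * Ys.head hYne) := by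
  obtain ⟨y, ys, rfl⟩ := List.exists_cons_of_ne_nil hYne
  have hXP : ∀ a ∈ Xs, a ∈ S.P := fun a ha => (hXsimple a ha).1
  have hYP : ∀ a ∈ y :: ys, a ∈ S.P := fun a ha => (hYsimple a ha).1
  have hXy :=
    S.le_mul_head_of_isChain_leftWeighted (S.positiveSubmonoid.list_prod_mem hXP) hYP hYw h
  exact S.le_getLast_mul_of_isChain_rightWeighted hft hXne (hYP y (by simp)) hXP hXw hXy
end

section
/- Let p ∈ ℤ and let a⃗ = (a₁,…,a_n) be a sequence of positive integers (n ≥ 0) such that one of the following holds: (i) n ≤ 1; (ii) a⃗ = (1,1) and p is even; (iii) n ≡ p (mod 2) and a_i ≥ 2 for all i. Let X(p,a⃗) = Δ^p σ₁^{a₁} σ₂^{a₂} σ₁^{a₃} σ₂^{a₄} ⋯ ∈ Br₃ (n alternating factors). If p < 0 and X(p,a⃗) is quasipositive, then 0 < p + n < 2·e(X(p,a⃗)). -/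
/-!
Through `σ₁ ↦ [[1, 1], [0, 1]]` and `σ₂ ↦ [[1, 0], [-1, 1]]`, the group `Br₃` acts on the rays of
`ℤ² ∖ 0`, and this lifts to an order-preserving action on the universal cover of the circle of
rays in which `Δ²` is the translation by a half-turn. Each `σᵢ` fixes a point and moves every point
forward by less than a half-turn, hence so does each of its conjugates. Therefore a quasipositive
`X` moves every point forward, and if `X` is a product of `e = e(X)` conjugates, evaluating `Xᵐ`
at a fixed point of the last one shows that `Xᵐ` advances points by at most `m (e - 1)`
half-turns, up to a bounded error.

When `n ≡ p (mod 2)` and all `aᵢ ≥ 2`, `X² = Δ^{2p} W` for an alternating word `W` of length `2n`,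
and the trajectory of a suitable point is computed exactly: after a first step of one octant,
each block `σᵢ^{aᵢ}` turns it by exactly two octants (a quarter-turn). Thus `X^{2m}` advances it
by `m (p + n)` half-turns minus one octant, which gives `0 < p + n ≤ 2 (e - 1)`. When `n ≤ 1`
or `a⃗ = (1, 1)`, the assumption `p < 0` makes some power of `X` move a point backwards, so `X`
is not quasipositive.
-/

/-- The defining relation `σ₁σ₂σ₁ = σ₂σ₁σ₂` of the braid group on 3 strings. -/
def braidRel3 : Set (FreeGroup (Fin 2)) :=
  {FreeGroup.of 0 * FreeGroup.of 1 * FreeGroup.of 0 *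
    (FreeGroup.of 1 * FreeGroup.of 0 * FreeGroup.of 1)⁻¹}

/-- The braid group `Br₃` on 3 strings. -/
abbrev BraidGroup3 : Type := PresentedGroup braidRel3

/-- The standard generators `σ₁, σ₂` of `Br₃` (indexed by `Fin 2`). -/
def sigma (i : Fin 2) : BraidGroup3 := PresentedGroup.of i

/-- The Garside element `Δ = σ₁σ₂σ₁` of `Br₃`. -/
def braidDelta : BraidGroup3 := sigma 0 * sigma 1 * sigma 0

/-- A braid is quasipositive if it is a product of conjugates of the standard generators. -/
def Quasipositive (X : BraidGroup3) : Prop :=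
  X ∈ Submonoid.closure
    {g : BraidGroup3 | ∃ (w : BraidGroup3) (i : Fin 2), g = w⁻¹ * sigma i * w}

/-- The alternating product `g^{a₁} h^{a₂} g^{a₃} h^{a₄} ⋯`. -/
def altFactors {M : Type*} [Monoid M] (g h : M) : List ℕ → M
  | [] => 1
  | a :: t => g ^ a * altFactors h g t

/-- The braid `X(p, a⃗) = Δ^p σ₁^{a₁} σ₂^{a₂} σ₁^{a₃} ⋯ ∈ Br₃`. -/
def Xbraid (p : ℤ) (as : List ℕ) : BraidGroup3 :=
  braidDelta ^ p * altFactors (sigma 0) (sigma 1) as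

section altFactors

variable {M N : Type*} [Monoid M] [Monoid N]

theorem map_altFactors (f : M →* N) (g h : M) (as : List ℕ) :
    f (altFactors g h as) = altFactors (f g) (f h) as := by
  induction as generalizing g h with
  | nil => simp [altFactors]
  | cons a t ih => simp [altFactors, ih]

theorem altFactors_self (g : M) (as : List ℕ) : altFactors g g as = g ^ as.sum := by
  induction as with
  | nil => simp [altFactors]
  | cons a t ih => simp [altFactors, ih, pow_add]

theorem altFactors_append (g h : M) (as bs : List ℕ) :
    altFactors g h (as ++ bs) =
      altFactors g h as * if Even as.length then altFactors g h bs else altFactors h g bs := by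
  induction as generalizing g h with
  | nil => simp [altFactors]
  | cons a t ih =>
    simp only [List.cons_append, altFactors, ih, List.length_cons, Nat.even_add_one, mul_assoc]
    by_cases ht : Even t.length <;> simp [ht]

theorem altFactors_pow {g h : M} {bs : List ℕ} (hbs : Even bs.length) (m : ℕ) :
    altFactors g h bs ^ m = altFactors g h (List.replicate m bs).flatten := by
  induction m with
  | zero => simp [altFactors]
  | succ m ih =>
    rw [pow_succ', ih, List.replicate_succ, List.flatten_cons, altFactors_append, if_pos hbs]

end altFactors

namespace BraidGroup3

theorem sigma_braid : sigma 0 * sigma 1 * sigma 0 = sigma 1 * sigma 0 * sigma 1 := by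
  have h : PresentedGroup.mk braidRel3 (FreeGroup.of 0 * FreeGroup.of 1 * FreeGroup.of 0 *
      (FreeGroup.of 1 * FreeGroup.of 0 * FreeGroup.of 1)⁻¹) = 1 := PresentedGroup.one_of_mem rfl
  simp only [map_mul, map_inv] at h
  exact mul_inv_eq_one.mp h

theorem sigma_mul_delta {i j : Fin 2} (hij : i ≠ j) :
    sigma i * braidDelta = braidDelta * sigma j := by
  fin_cases i <;> fin_cases j <;> simp only [ne_eq, not_true_eq_false] at hij
  · calc sigma 0 * braidDelta = sigma 0 * (sigma 1 * sigma 0 * sigma 1) := by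
          rw [← sigma_braid, braidDelta]
      _ = braidDelta * sigma 1 := by simp only [braidDelta, mul_assoc]
  · calc sigma 1 * braidDelta = sigma 1 * sigma 0 * sigma 1 * sigma 0 := by
          simp only [braidDelta, mul_assoc]
      _ = braidDelta * sigma 0 := by rw [← sigma_braid, braidDelta]

theorem delta_inv_mul_sigma_mul_delta {i j : Fin 2} (hij : i ≠ j) :
    braidDelta⁻¹ * sigma i * braidDelta = sigma j := by
  rw [mul_assoc, sigma_mul_delta hij, inv_mul_cancel_left]

theorem delta_sq_commute (g : BraidGroup3) : Commute (braidDelta ^ 2) g := by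
  have hσ : ∀ i j : Fin 2, i ≠ j → sigma i * braidDelta ^ 2 = braidDelta ^ 2 * sigma i :=
    fun i j hij => by
      rw [pow_two, ← mul_assoc, sigma_mul_delta hij, mul_assoc, sigma_mul_delta hij.symm,
        mul_assoc]
  refine (Subgroup.mem_centralizer_singleton_iff.mp
    (PresentedGroup.generated_by braidRel3 _ (fun i => ?_) g)).symm
  rw [Subgroup.mem_centralizer_singleton_iff]
  fin_cases i
  · exact hσ 0 1 zero_ne_one
  · exact hσ 1 0 one_ne_zero

theorem sigma_mul_sigma_pow_three : (sigma 0 * sigma 1) ^ 3 = braidDelta ^ 2 := by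
  calc (sigma 0 * sigma 1) ^ 3 = sigma 0 * sigma 1 * sigma 0 * (sigma 1 * sigma 0 * sigma 1) := by
        simp only [pow_succ, pow_zero, one_mul, mul_assoc]
    _ = braidDelta ^ 2 := by rw [← sigma_braid, braidDelta, pow_two]

theorem delta_zpow_conj (p : ℤ) (g : BraidGroup3) :
    (braidDelta ^ p)⁻¹ * g * braidDelta ^ p =
      if Even p then g else braidDelta⁻¹ * g * braidDelta := by
  obtain ⟨q, rfl | rfl⟩ := Int.even_or_odd' p
  · have h : braidDelta ^ (2 * q) = (braidDelta ^ 2) ^ q := by rw [zpow_mul]; rfl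
    rw [if_pos (even_two_mul q), h, mul_assoc, ← ((delta_sq_commute g).zpow_left q).eq,
      inv_mul_cancel_left]
  · have h : braidDelta ^ (2 * q + 1) = (braidDelta ^ 2) ^ q * braidDelta := by
      rw [zpow_add_one, zpow_mul]; rfl
    rw [if_neg (Int.not_even_iff_odd.mpr (odd_two_mul_add_one q)), h, mul_inv_rev]
    simp only [mul_assoc]
    rw [← mul_assoc g, ← ((delta_sq_commute g).zpow_left q).eq, mul_assoc, inv_mul_cancel_left]

theorem delta_inv_mul_altFactors_mul_delta {i j : Fin 2} (hij : i ≠ j) (as : List ℕ) :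
    braidDelta⁻¹ * altFactors (sigma i) (sigma j) as * braidDelta =
      altFactors (sigma j) (sigma i) as := by
  have h := map_altFactors (MulAut.conj braidDelta⁻¹).toMonoidHom (sigma i) (sigma j) as
  simp only [MulEquiv.coe_toMonoidHom, MulAut.conj_apply, inv_inv] at h
  rw [h, delta_inv_mul_sigma_mul_delta hij, delta_inv_mul_sigma_mul_delta hij.symm]

theorem sq_Xbraid (p : ℤ) (as : List ℕ) :
    Xbraid p as ^ 2 = (braidDelta ^ 2) ^ p *
      ((if Even p then altFactors (sigma 0) (sigma 1) as else altFactors (sigma 1) (sigma 0) as) *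
        altFactors (sigma 0) (sigma 1) as) := by
  have hconj := delta_zpow_conj p (altFactors (sigma 0) (sigma 1) as)
  rw [delta_inv_mul_altFactors_mul_delta zero_ne_one] at hconj
  have hsq : (braidDelta ^ 2) ^ p = braidDelta ^ p * braidDelta ^ p := by
    rw [← zpow_natCast, ← zpow_mul, ← zpow_add]; ring_nf
  rw [← hconj, Xbraid, pow_two, hsq]
  simp only [mul_assoc, mul_inv_cancel_left]

theorem exists_sq_Xbraid_eq {p : ℤ} {as : List ℕ} (hpar : Even as.length ↔ Even p) :
    ∃ i j : Fin 2, i ≠ j ∧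
      Xbraid p as ^ 2 = (braidDelta ^ 2) ^ p * altFactors (sigma i) (sigma j) (as ++ as) := by
  rw [sq_Xbraid]
  by_cases hp : Even p
  · exact ⟨0, 1, zero_ne_one, by rw [if_pos hp, altFactors_append, if_pos (hpar.mpr hp)]⟩
  · exact ⟨1, 0, one_ne_zero, by rw [if_neg hp, altFactors_append, if_neg (hp ∘ hpar.mp)]⟩

def generatorConjugates : Set BraidGroup3 :=
  {g | ∃ (w : BraidGroup3) (i : Fin 2), g = w⁻¹ * sigma i * w}

def exponentSum : BraidGroup3 →* Multiplicative ℤ :=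
  PresentedGroup.toGroup (f := fun _ => Multiplicative.ofAdd 1) <| by
    rintro r rfl
    simp only [map_mul, map_inv, FreeGroup.lift_apply_of]
    group

theorem exponentSum_sigma (i : Fin 2) : exponentSum (sigma i) = Multiplicative.ofAdd 1 :=
  PresentedGroup.toGroup.of _

theorem toAdd_exponentSum_Xbraid (p : ℤ) (as : List ℕ) :
    (exponentSum (Xbraid p as)).toAdd = 3 * p + as.sum := by
  simp only [Xbraid, braidDelta, map_mul, map_zpow, exponentSum_sigma, map_altFactors,
    altFactors_self, toAdd_mul, toAdd_zpow, toAdd_ofAdd, toAdd_pow, smul_eq_mul, nsmul_eq_mul]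
  push_cast
  ring

theorem toAdd_exponentSum_list_prod {l : List BraidGroup3}
    (hl : ∀ g ∈ l, g ∈ generatorConjugates) :
    (exponentSum l.prod).toAdd = l.length := by
  induction l with
  | nil => simp
  | cons g t ih =>
    obtain ⟨w, i, rfl⟩ := hl g List.mem_cons_self
    rw [List.prod_cons, map_mul, toAdd_mul, ih fun g hg => hl g (List.mem_cons_of_mem _ hg)]
    simp only [map_mul, map_inv, exponentSum_sigma, inv_mul_cancel_comm, toAdd_ofAdd,
      List.length_cons]
    push_cast
    ring

end BraidGroup3

namespace BraidCover

open Equiv BraidGroup3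

abbrev NonzeroVec : Type := {v : ℤ × ℤ // v.1 ≠ 0 ∨ v.2 ≠ 0}

/-- The plane is cut by the lines `a = 0`, `b = 0`, `a = b`, `a = -b` into eight half-open
sectors, numbered clockwise starting from the positive first axis. -/
def octant (v : ℤ × ℤ) : ℤ :=
  if 0 < v.1 ∧ v.2 ≤ 0 ∧ 0 < v.1 + v.2 then 0
  else if 0 < v.1 ∧ v.2 < 0 ∧ v.1 + v.2 ≤ 0 then 1
  else if v.1 ≤ 0 ∧ v.2 < 0 ∧ v.2 < v.1 then 2
  else if v.1 < 0 ∧ v.2 < 0 ∧ v.1 ≤ v.2 then 3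
  else if v.1 < 0 ∧ 0 ≤ v.2 ∧ v.1 + v.2 < 0 then 4
  else if v.1 < 0 ∧ 0 < v.2 ∧ 0 ≤ v.1 + v.2 then 5
  else if 0 ≤ v.1 ∧ 0 < v.2 ∧ v.1 < v.2 then 6
  else 7

theorem octant_spec (v : ℤ × ℤ) (hv : v.1 ≠ 0 ∨ v.2 ≠ 0) :
    (octant v = 0 ∧ 0 < v.1 ∧ v.2 ≤ 0 ∧ 0 < v.1 + v.2) ∨
    (octant v = 1 ∧ 0 < v.1 ∧ v.2 < 0 ∧ v.1 + v.2 ≤ 0) ∨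
    (octant v = 2 ∧ v.1 ≤ 0 ∧ v.2 < 0 ∧ v.2 < v.1) ∨
    (octant v = 3 ∧ v.1 < 0 ∧ v.2 < 0 ∧ v.1 ≤ v.2) ∨
    (octant v = 4 ∧ v.1 < 0 ∧ 0 ≤ v.2 ∧ v.1 + v.2 < 0) ∨
    (octant v = 5 ∧ v.1 < 0 ∧ 0 < v.2 ∧ 0 ≤ v.1 + v.2) ∨
    (octant v = 6 ∧ 0 ≤ v.1 ∧ 0 < v.2 ∧ v.1 < v.2) ∨
    (octant v = 7 ∧ 0 < v.1 ∧ 0 < v.2 ∧ v.2 ≤ v.1) := by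
  unfold octant
  split_ifs with h₀ h₁ h₂ h₃ h₄ h₅ h₆
  · exact Or.inl ⟨rfl, h₀⟩
  · exact Or.inr <| Or.inl ⟨rfl, h₁⟩
  · exact Or.inr <| Or.inr <| Or.inl ⟨rfl, h₂⟩
  · exact Or.inr <| Or.inr <| Or.inr <| Or.inl ⟨rfl, h₃⟩
  · exact Or.inr <| Or.inr <| Or.inr <| Or.inr <| Or.inl ⟨rfl, h₄⟩
  · exact Or.inr <| Or.inr <| Or.inr <| Or.inr <| Or.inr <| Or.inl ⟨rfl, h₅⟩
  · exact Or.inr <| Or.inr <| Or.inr <| Or.inr <| Or.inr <| Or.inr <| Or.inl ⟨rfl, h₆⟩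
  · exact Or.inr <| Or.inr <| Or.inr <| Or.inr <| Or.inr <| Or.inr <| Or.inr ⟨rfl, by omega⟩

theorem octant_nonneg_and_lt_eight (v : NonzeroVec) : 0 ≤ octant v ∧ octant v < 8 := by
  have := octant_spec v v.2
  omega

/-- `cross v w < 0` means that `w` lies strictly clockwise of `v`, less than a half-turn away. -/
def cross (v w : ℤ × ℤ) : ℤ := v.1 * w.2 - v.2 * w.1

theorem cross_neg_of_octant_succ {v w : NonzeroVec} (h : (octant w - octant v) % 8 = 1) :
    cross v w < 0 := by
  unfold cross
  rcases octant_spec v v.2 with ⟨hv, _⟩ | ⟨hv, _⟩ | ⟨hv, _⟩ | ⟨hv, _⟩ | ⟨hv, _⟩ | ⟨hv, _⟩ |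
      ⟨hv, _⟩ | ⟨hv, _⟩ <;>
    rcases octant_spec w w.2 with ⟨hw, _⟩ | ⟨hw, _⟩ | ⟨hw, _⟩ | ⟨hw, _⟩ | ⟨hw, _⟩ | ⟨hw, _⟩ |
      ⟨hw, _⟩ | ⟨hw, _⟩ <;>
    rw [hv, hw] at h <;> norm_num at h <;> nlinarith

theorem cross_neg_trans_of_pos {ℓ u v w : ℤ × ℤ} (hu : 0 < ℓ.1 * u.1 + ℓ.2 * u.2)
    (hv : 0 < ℓ.1 * v.1 + ℓ.2 * v.2) (hw : 0 < ℓ.1 * w.1 + ℓ.2 * w.2)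
    (huv : cross u v < 0) (hvw : cross v w < 0) : cross u w < 0 := by
  have key : (ℓ.1 * v.1 + ℓ.2 * v.2) * cross u w =
      (ℓ.1 * w.1 + ℓ.2 * w.2) * cross u v + (ℓ.1 * u.1 + ℓ.2 * u.2) * cross v w := by
    unfold cross; ring
  nlinarith [mul_neg_of_pos_of_neg hw huv, mul_neg_of_pos_of_neg hu hvw]

theorem exists_pos_of_octant_eq (k : ℤ) :
    ∃ ℓ : ℤ × ℤ, ∀ v : NonzeroVec, octant v = k → 0 < ℓ.1 * v.1.1 + ℓ.2 * v.1.2 := by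
  rcases (by omega : (k = 0 ∨ k = 1 ∨ k = 7) ∨ k = 2 ∨ (3 ≤ k ∧ k ≤ 5) ∨
    ¬(0 ≤ k ∧ k ≤ 5 ∨ k = 7)) with hk | hk | hk | hk
  · exact ⟨(1, 0), fun v h => by have := octant_spec v v.2; simp only; omega⟩
  · exact ⟨(0, -1), fun v h => by have := octant_spec v v.2; simp only; omega⟩
  · exact ⟨(-1, 0), fun v h => by have := octant_spec v v.2; simp only; omega⟩
  · exact ⟨(0, 1), fun v h => by have := octant_spec v v.2; simp only; omega⟩

theorem cross_neg_trans {u v w : NonzeroVec} (huv : octant u = octant v)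
    (hwv : octant w = octant v) (h₁ : cross u v < 0) (h₂ : cross v w < 0) : cross u w < 0 := by
  obtain ⟨ℓ, hℓ⟩ := exists_pos_of_octant_eq (octant v)
  exact cross_neg_trans_of_pos (hℓ u huv) (hℓ v rfl) (hℓ w hwv) h₁ h₂

/-- A point of the infinite cyclic cover of the circle of rays: a nonzero vector together with
the number of full clockwise turns made. -/
@[ext]
structure Cover where
  ray : NonzeroVec
  level : ℤ

namespace Cover

def height (x : Cover) : ℤ := 8 * x.level + octant x.ray

theorem octant_eq_of_height_eq {x y : Cover} (h : x.height = y.height) :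
    octant x.ray = octant y.ray := by
  have := octant_nonneg_and_lt_eight x.ray
  have := octant_nonneg_and_lt_eight y.ray
  unfold height at h
  omega

theorem cross_neg_of_height_eq_add_one {x y : Cover} (h : y.height = x.height + 1) :
    cross x.ray y.ray < 0 := by
  have := octant_nonneg_and_lt_eight x.ray
  have := octant_nonneg_and_lt_eight y.ray
  unfold height at h
  exact cross_neg_of_octant_succ (by omega)

def Before (x y : Cover) : Prop :=
  x.height < y.height ∨ x.height = y.height ∧ cross x.ray y.ray < 0

instance : IsStrictOrder Cover Before where
  irrefl x h := by
    rcases h with h | ⟨-, h⟩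
    · exact lt_irrefl _ h
    · simp [cross, mul_comm] at h
  trans x y z hxy hyz := by
    rcases hxy with hxy | ⟨hxy, cxy⟩ <;> rcases hyz with hyz | ⟨hyz, cyz⟩
    · exact Or.inl (hxy.trans hyz)
    · exact Or.inl (hyz ▸ hxy)
    · exact Or.inl (hxy ▸ hyz)
    · exact Or.inr ⟨hxy.trans hyz, cross_neg_trans (octant_eq_of_height_eq hxy)
        (octant_eq_of_height_eq hyz).symm cxy cyz⟩

instance : PartialOrder Cover := partialOrderOfSO Before

theorem lt_of_height_lt {x y : Cover} (h : x.height < y.height) : x < y := Or.inl h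

theorem height_le_height {x y : Cover} (h : x ≤ y) : x.height ≤ y.height := by
  rcases h with rfl | h | ⟨h, -⟩ <;> omega

/-- Points whose heights differ by one are always ordered, so heights may move by `c` or `c + 1`. -/
theorem strictMono_of_height_step {f : Cover → Cover}
    (hcross : ∀ x y, cross (f x).ray (f y).ray = cross x.ray y.ray) (c : ℤ)
    (hstep : ∀ x, c ≤ (f x).height - x.height ∧ (f x).height - x.height ≤ c + 1) :
    StrictMono f := by
  intro x y hxy
  have hx := hstep x
  have hy := hstep y
  rcases hxy with hlt | ⟨heq, hc⟩
  · rcases (show (f x).height ≤ (f y).height by omega).lt_or_eq with h | h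
    · exact Or.inl h
    · exact Or.inr ⟨h, hcross x y ▸ cross_neg_of_height_eq_add_one (by omega)⟩
  · rcases lt_trichotomy (f x).height (f y).height with h | h | h
    · exact Or.inl h
    · exact Or.inr ⟨h, hcross x y ▸ hc⟩
    · have hyx := hcross y x ▸ cross_neg_of_height_eq_add_one (x := f y) (y := f x) (by omega)
      unfold cross at hc hyx
      linarith

end Cover

open Cover

def turn (g : Perm NonzeroVec) (v : NonzeroVec) : ℤ := (octant (g v) - octant v) % 8

theorem turn_nonneg (g : Perm NonzeroVec) (v : NonzeroVec) : 0 ≤ turn g v :=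
  Int.emod_nonneg _ (by norm_num)

/-- The lift of `g` to the cover which moves every point clockwise by less than a full turn. -/
def forwardLift (g : Perm NonzeroVec) : Perm Cover where
  toFun x := ⟨g x.ray, x.level + if octant (g x.ray) < octant x.ray then 1 else 0⟩
  invFun x := ⟨g.symm x.ray, x.level - if octant x.ray < octant (g.symm x.ray) then 1 else 0⟩
  left_inv x := by simp
  right_inv x := by simp

theorem forwardLift_apply (g : Perm NonzeroVec) (x : Cover) :
    forwardLift g x = ⟨g x.ray, x.level + if octant (g x.ray) < octant x.ray then 1 else 0⟩ := rfl

theorem height_forwardLift (g : Perm NonzeroVec) (x : Cover) :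
    (forwardLift g x).height = x.height + turn g x.ray := by
  have := octant_nonneg_and_lt_eight x.ray
  have := octant_nonneg_and_lt_eight (g x.ray)
  simp only [forwardLift_apply, height, turn]
  split_ifs <;> omega

theorem height_forwardLift_symm (g : Perm NonzeroVec) (x : Cover) :
    ((forwardLift g).symm x).height = x.height - turn g (g.symm x.ray) := by
  have h := height_forwardLift g ((forwardLift g).symm x)
  rw [apply_symm_apply] at h
  have hray : ((forwardLift g).symm x).ray = g.symm x.ray := rfl
  rw [hray] at h
  omega

theorem forwardLift_one : forwardLift 1 = 1 := by
  ext x <;> simp [forwardLift_apply]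

theorem forwardLift_mul {g h : Perm NonzeroVec} (hgh : ∀ v, turn h v + turn g (h v) < 8) :
    forwardLift g * forwardLift h = forwardLift (g * h) := by
  refine Equiv.ext fun x => Cover.ext rfl ?_
  have := octant_nonneg_and_lt_eight x.ray
  have := octant_nonneg_and_lt_eight (h x.ray)
  have := octant_nonneg_and_lt_eight (g (h x.ray))
  have := hgh x.ray
  simp only [Perm.mul_apply, forwardLift_apply, turn] at this ⊢
  split_ifs <;> omega

theorem turn_mul {g h : Perm NonzeroVec} (v : NonzeroVec) (hgh : turn h v + turn g (h v) < 8) :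
    turn (g * h) v = turn h v + turn g (h v) := by
  have := octant_nonneg_and_lt_eight v
  have := octant_nonneg_and_lt_eight (h v)
  have := octant_nonneg_and_lt_eight (g (h v))
  simp only [turn, Perm.mul_apply] at hgh ⊢
  omega

theorem forwardLift_list_prod (l : List (Perm NonzeroVec)) (hl : ∀ g ∈ l, ∀ v, turn g v ≤ 1)
    (hlen : l.length < 8) :
    (l.map forwardLift).prod = forwardLift l.prod ∧ ∀ v, turn l.prod v ≤ l.length := by
  induction l with
  | nil => exact ⟨forwardLift_one.symm, fun v => by simp [turn]⟩
  | cons g t ih =>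
    have hlen' : t.length + 1 < 8 := by simpa using hlen
    obtain ⟨hprod, hturn⟩ := ih (fun g hg => hl g (List.mem_cons_of_mem _ hg)) (by omega)
    have hg := hl g List.mem_cons_self
    have hsum : ∀ v, turn t.prod v + turn g (t.prod v) < 8 := fun v => by
      have := hturn v; have := hg (t.prod v); omega
    refine ⟨by rw [List.map_cons, List.prod_cons, hprod, List.prod_cons, forwardLift_mul hsum], ?_⟩
    intro v
    rw [List.prod_cons, turn_mul v (hsum v), List.length_cons]
    have := hturn v; have := hg (t.prod v)
    omega

theorem strictMono_forwardLift {g : Perm NonzeroVec}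
    (hcross : ∀ v w, cross (g v) (g w) = cross v w) (hturn : ∀ v, turn g v ≤ 1) :
    StrictMono (forwardLift g) :=
  strictMono_of_height_step (fun x y => hcross x.ray y.ray) 0 fun x => by
    rw [height_forwardLift]
    have := hturn x.ray; have := turn_nonneg g x.ray
    omega

theorem strictMono_forwardLift_symm {g : Perm NonzeroVec}
    (hcross : ∀ v w, cross (g v) (g w) = cross v w) (hturn : ∀ v, turn g v ≤ 1) :
    StrictMono (forwardLift g).symm := by
  have hray : ∀ x, ((forwardLift g).symm x).ray = g.symm x.ray := fun _ => rfl
  refine strictMono_of_height_step (fun x y => ?_) (-1) fun x => ?_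
  · rw [← hcross, hray, hray, apply_symm_apply, apply_symm_apply]
  · rw [height_forwardLift_symm]
    have := hturn (g.symm x.ray); have := turn_nonneg g (g.symm x.ray)
    omega

theorem le_forwardLift {g : Perm NonzeroVec} (hturn : ∀ v, turn g v ≤ 1)
    (hfwd : ∀ v, g v = v ∨ cross v (g v) < 0) (x : Cover) : x ≤ forwardLift g x := by
  rcases hfwd x.ray with h | h
  · exact Or.inl (by ext <;> simp [forwardLift_apply, h])
  · have hheight := height_forwardLift g x
    have := hturn x.ray; have := turn_nonneg g x.ray
    rcases (show turn g x.ray = 0 ∨ turn g x.ray = 1 by omega) with hturn₀ | hturn₁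
    · exact Or.inr (Or.inr ⟨by omega, h⟩)
    · exact Or.inr (Or.inl (by omega))

def upperShear : Perm NonzeroVec where
  toFun v := ⟨(v.1.1 + v.1.2, v.1.2), by have := v.2; omega⟩
  invFun v := ⟨(v.1.1 - v.1.2, v.1.2), by have := v.2; omega⟩
  left_inv v := by ext <;> simp
  right_inv v := by ext <;> simp

def lowerShear : Perm NonzeroVec where
  toFun v := ⟨(v.1.1, v.1.2 - v.1.1), by have := v.2; omega⟩
  invFun v := ⟨(v.1.1, v.1.2 + v.1.1), by have := v.2; omega⟩
  left_inv v := by ext <;> simp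
  right_inv v := by ext <;> simp

def negVec : Perm NonzeroVec where
  toFun v := ⟨(-v.1.1, -v.1.2), by have := v.2; omega⟩
  invFun v := ⟨(-v.1.1, -v.1.2), by have := v.2; omega⟩
  left_inv v := by ext <;> simp
  right_inv v := by ext <;> simp

/-- The images of `σ₁, σ₂` in `SL(2, ℤ)`, acting on nonzero vectors. -/
def shear : Fin 2 → Perm NonzeroVec := ![upperShear, lowerShear]

@[simp] theorem shear_zero_apply (v : NonzeroVec) :
    (shear 0 v : ℤ × ℤ) = (v.1.1 + v.1.2, v.1.2) := rfl

@[simp] theorem shear_one_apply (v : NonzeroVec) :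
    (shear 1 v : ℤ × ℤ) = (v.1.1, v.1.2 - v.1.1) := rfl

@[simp] theorem negVec_apply (v : NonzeroVec) : (negVec v : ℤ × ℤ) = (-v.1.1, -v.1.2) := rfl

theorem shear_braid : shear 0 * shear 1 * shear 0 = shear 1 * shear 0 * shear 1 := by
  ext v <;> simp

theorem shear_delta_sq : ([0, 1, 0, 0, 1, 0].map shear).prod = negVec := by
  ext v <;> simp

theorem cross_shear (i : Fin 2) (v w : NonzeroVec) :
    cross (shear i v) (shear i w) = cross v w := by
  fin_cases i <;> simp only [cross, Fin.zero_eta, Fin.mk_one, shear_zero_apply,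
    shear_one_apply] <;> ring

theorem turn_shear_le_one (i : Fin 2) (v : NonzeroVec) : turn (shear i) v ≤ 1 := by
  have hv := octant_spec v v.2
  have hw := octant_spec (shear i v) (shear i v).2
  fin_cases i <;> simp only [turn] <;> simp only [Fin.zero_eta, Fin.mk_one, shear_zero_apply,
    shear_one_apply] at hw ⊢ <;> omega

theorem shear_eq_or_cross_neg (i : Fin 2) (v : NonzeroVec) :
    shear i v = v ∨ cross v (shear i v) < 0 := by
  obtain ⟨⟨a, b⟩, hv⟩ := v
  fin_cases i
  · rcases eq_or_ne b 0 with rfl | hb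
    · exact Or.inl (Subtype.ext (by simp))
    · right
      simp only [cross, Fin.zero_eta, shear_zero_apply]
      nlinarith [mul_self_pos.mpr hb]
  · rcases eq_or_ne a 0 with rfl | ha
    · exact Or.inl (Subtype.ext (by simp))
    · right
      simp only [cross, Fin.mk_one, shear_one_apply]
      nlinarith [mul_self_pos.mpr ha]

theorem turn_negVec (v : NonzeroVec) : turn negVec v = 4 := by
  have hv := octant_spec v v.2
  have hw := octant_spec (negVec v) (negVec v).2
  simp only [turn, negVec_apply] at hw ⊢
  omega

/-- Octants `≡ sinkOct i (mod 4)` are those that `σᵢ` maps into themselves: the shear pushes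
every ray towards its fixed axis and stops turning it there. -/
def sinkOct : Fin 2 → ℤ := ![3, 1]

theorem turn_shear (i : Fin 2) (v : NonzeroVec) (h : (sinkOct i - octant v) % 4 ≤ 2) :
    turn (shear i) v = if (sinkOct i - octant v) % 4 = 0 then 0 else 1 := by
  have hv := octant_spec v v.2
  have hw := octant_spec (shear i v) (shear i v).2
  fin_cases i <;> simp only [turn, sinkOct] at h ⊢ <;> simp only [Fin.zero_eta, Fin.mk_one,
    shear_zero_apply, shear_one_apply, Matrix.cons_val_zero, Matrix.cons_val_one] at hw h ⊢ <;>
    split_ifs <;> omega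

theorem sinkOct_add_two_of_ne {i j : Fin 2} (hij : i ≠ j) :
    (sinkOct j + 2) % 4 = sinkOct i := by
  fin_cases i <;> fin_cases j <;> simp_all [sinkOct]

def shearIso (i : Fin 2) : Cover ≃o Cover :=
  (forwardLift (shear i)).toOrderIso
    (strictMono_forwardLift (cross_shear i) (turn_shear_le_one i)).monotone
    (strictMono_forwardLift_symm (cross_shear i) (turn_shear_le_one i)).monotone

theorem forwardLift_list_prod_apply {l : List (Perm NonzeroVec)}
    (hl : ∀ g ∈ l, ∀ v, turn g v ≤ 1) (hlen : l.length < 8) (x : Cover) :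
    (l.map forwardLift).prod x = forwardLift l.prod x := by
  rw [(forwardLift_list_prod l hl hlen).1]

theorem turn_le_one_of_mem_map_shear {l : List (Fin 2)} :
    ∀ g ∈ l.map shear, ∀ v, turn g v ≤ 1 := by
  simp only [List.mem_map]
  rintro _ ⟨i, -, rfl⟩ v
  exact turn_shear_le_one i v

def act : BraidGroup3 →* Cover ≃o Cover :=
  PresentedGroup.toGroup (f := shearIso) <| by
    rintro r rfl
    simp only [map_mul, map_inv, FreeGroup.lift_apply_of, mul_inv_eq_one]
    refine DFunLike.ext _ _ fun x => ?_
    have h := forwardLift_list_prod_apply (turn_le_one_of_mem_map_shear (l := [0, 1, 0]))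
      (by simp) x
    have h' := forwardLift_list_prod_apply (turn_le_one_of_mem_map_shear (l := [1, 0, 1]))
      (by simp) x
    simp only [List.map_cons, List.map_nil, List.prod_cons, List.prod_nil, mul_one,
      Perm.mul_apply] at h h'
    simp only [← mul_assoc, shear_braid] at h
    exact h.trans h'.symm

@[simp] theorem act_mul_apply (g h : BraidGroup3) (x : Cover) :
    act (g * h) x = act g (act h x) := by
  rw [map_mul]; rfl

@[simp] theorem act_one_apply (x : Cover) : act 1 x = x := by
  rw [map_one]; rfl

theorem act_sigma_apply (i : Fin 2) (x : Cover) : act (sigma i) x = forwardLift (shear i) x := by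
  rw [sigma, act, PresentedGroup.toGroup.of]; rfl

theorem height_act_sigma (i : Fin 2) (x : Cover) :
    (act (sigma i) x).height = x.height + turn (shear i) x.ray := by
  rw [act_sigma_apply, height_forwardLift]

theorem height_act_delta_sq (x : Cover) : (act (braidDelta ^ 2) x).height = x.height + 4 := by
  have h := forwardLift_list_prod_apply
    (turn_le_one_of_mem_map_shear (l := [0, 1, 0, 0, 1, 0])) (by simp) x
  rw [shear_delta_sq] at h
  simp only [List.map_cons, List.map_nil, List.prod_cons, List.prod_nil, mul_one,
    Perm.mul_apply] at h
  rw [pow_two, braidDelta]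
  simp only [act_mul_apply, act_sigma_apply, h]
  rw [height_forwardLift, turn_negVec]

theorem height_act_delta_sq_zpow (k : ℤ) (x : Cover) :
    (act ((braidDelta ^ 2) ^ k) x).height = x.height + 4 * k := by
  induction k using Int.induction_on generalizing x with
  | zero => simp
  | succ k ih => rw [zpow_add_one, act_mul_apply, ih, height_act_delta_sq]; ring
  | pred k ih =>
    have h := height_act_delta_sq (act ((braidDelta ^ 2) ^ (-(k : ℤ) - 1)) x)
    rw [← act_mul_apply, ← zpow_one_add, add_sub_cancel, ih] at h
    linarith

theorem height_act_delta_sq_pow (n : ℕ) (x : Cover) :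
    (act ((braidDelta ^ 2) ^ n) x).height = x.height + 4 * n := by
  rw [← zpow_natCast, height_act_delta_sq_zpow]

theorem act_delta_sq_pow_comm (g : BraidGroup3) (n : ℕ) (x : Cover) :
    act g (act ((braidDelta ^ 2) ^ n) x) = act ((braidDelta ^ 2) ^ n) (act g x) := by
  rw [← act_mul_apply, ← act_mul_apply, ((delta_sq_commute g).pow_left n).eq]

theorem height_act_sigma_pow (i : Fin 2) (a : ℕ) (y : Cover)
    (hd : (sinkOct i - y.height) % 4 ≤ 2) :
    (act (sigma i ^ a) y).height = y.height + min (a : ℤ) ((sinkOct i - y.height) % 4) := by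
  induction a generalizing y with
  | zero => rw [pow_zero, act_one_apply]; omega
  | succ a ih =>
    have hoct : (sinkOct i - octant y.ray) % 4 = (sinkOct i - y.height) % 4 := by
      unfold height; omega
    have hstep := height_act_sigma i y
    rw [turn_shear i y.ray (hoct ▸ hd), hoct] at hstep
    rw [pow_succ, act_mul_apply, ih _ (by split_ifs at hstep <;> omega), hstep]
    split_ifs <;> omega

/-- The first block to act turns `y` by `d` octants, every later block by two; the congruence
says that the head block `σᵢ^{a₁}` ends in an octant that `σᵢ` maps into itself. -/
theorem height_act_altFactors {i j : Fin 2} (hij : i ≠ j) {as : List ℕ} (hne : as ≠ [])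
    (h2 : ∀ a ∈ as, 2 ≤ a) {d : ℤ} (hd : 1 ≤ d ∧ d ≤ 2) {y : Cover}
    (hy : (y.height + d + 2 * (as.length - 1 : ℤ)) % 4 = sinkOct i) :
    (act (altFactors (sigma i) (sigma j) as) y).height =
      y.height + d + 2 * (as.length - 1 : ℤ) := by
  induction as generalizing i j with
  | nil => contradiction
  | cons a t ih =>
    have ha := h2 a List.mem_cons_self
    have hsi := sinkOct_add_two_of_ne hij
    have hsj := sinkOct_add_two_of_ne hij.symm
    rw [altFactors, act_mul_apply]
    rcases eq_or_ne t [] with rfl | ht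
    · simp only [altFactors, act_one_apply, List.length_singleton] at hy ⊢
      rw [height_act_sigma_pow i a y (by omega)]
      omega
    · simp only [List.length_cons, Nat.cast_add, Nat.cast_one] at hy ⊢
      have hz := ih hij.symm ht (fun b hb => h2 b (List.mem_cons_of_mem a hb)) (by omega)
      rw [height_act_sigma_pow i a _ (by omega), hz]
      omega

def fixedPoint : Fin 2 → Cover := ![⟨⟨(1, 0), by decide⟩, 0⟩, ⟨⟨(0, -1), by decide⟩, 0⟩]

theorem act_sigma_fixedPoint (i : Fin 2) : act (sigma i) (fixedPoint i) = fixedPoint i := by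
  rw [act_sigma_apply]
  fin_cases i <;> ext <;> simp [forwardLift_apply, fixedPoint]

theorem act_sigma_pow_fixedPoint (i : Fin 2) (a : ℕ) :
    act (sigma i ^ a) (fixedPoint i) = fixedPoint i := by
  induction a with
  | zero => simp
  | succ a ih => rw [pow_succ, act_mul_apply, act_sigma_fixedPoint, ih]

theorem height_fixedPoint_add_three (i : Fin 2) :
    ((fixedPoint i).height + 3) % 4 = sinkOct i := by
  fin_cases i <;> decide

theorem exists_height_act_Xbraid_pow {p : ℤ} {as : List ℕ} (hpar : Even as.length ↔ Even p)
    (hne : as ≠ []) (h2 : ∀ a ∈ as, 2 ≤ a) :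
    ∃ y : Cover, ∀ m : ℕ, (act (Xbraid p as ^ (2 * (m + 1))) y).height =
      y.height + 4 * (p + as.length) * (m + 1) - 1 := by
  obtain ⟨i, j, hij, hsq⟩ := exists_sq_Xbraid_eq hpar
  -- Only `height ≡ sinkOct i + 1 (mod 4)` matters here: the first block turns the point by one
  -- octant, every later one by two.
  refine ⟨fixedPoint i, fun m => ?_⟩
  set w := (List.replicate (m + 1) (as ++ as)).flatten with hw
  have hpow : Xbraid p as ^ (2 * (m + 1)) =
      (braidDelta ^ 2) ^ (p * (m + 1 : ℕ)) * altFactors (sigma i) (sigma j) w := by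
    rw [pow_mul, hsq, ((delta_sq_commute _).zpow_left p).mul_pow,
      altFactors_pow (by simp) (m + 1), zpow_mul, zpow_natCast]
  have hlen : (w.length : ℤ) = 2 * (as.length * (m + 1) : ℕ) := by
    simp only [hw, List.length_flatten, List.map_replicate, List.length_append,
      List.sum_replicate, smul_eq_mul]
    push_cast
    ring
  have hn : 0 < as.length := List.length_pos_iff.mpr hne
  have hw2 : ∀ a ∈ w, 2 ≤ a := by
    intro a ha
    simp only [hw, List.mem_flatten, List.mem_replicate] at ha
    obtain ⟨_, ⟨-, rfl⟩, ha⟩ := ha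
    rcases List.mem_append.mp ha with ha | ha <;> exact h2 a ha
  have hs := height_fixedPoint_add_three i
  rw [hpow, act_mul_apply, height_act_delta_sq_zpow,
    height_act_altFactors hij (by simpa [← List.length_pos_iff, hw] using hn) hw2 (d := 1)
      (by norm_num) (by rw [hlen]; push_cast; omega), hlen]
  push_cast
  ring

theorem le_act_conj_and_lt {g : BraidGroup3} (hg : g ∈ generatorConjugates) (x : Cover) :
    x ≤ act g x ∧ act g x < act (braidDelta ^ 2) x := by
  obtain ⟨w, i, rfl⟩ := hg
  have h₁ : act w x ≤ act (sigma i) (act w x) := by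
    rw [act_sigma_apply]
    exact le_forwardLift (turn_shear_le_one i) (shear_eq_or_cross_neg i) _
  have h₂ : act (sigma i) (act w x) < act (braidDelta ^ 2) (act w x) := by
    refine lt_of_height_lt ?_
    rw [height_act_sigma, height_act_delta_sq]
    have := turn_shear_le_one i (act w x).ray
    omega
  have h₃ := (act w⁻¹).strictMono h₂
  rw [← pow_one (braidDelta ^ 2), act_delta_sq_pow_comm] at h₃
  simpa using And.intro ((act w⁻¹).monotone h₁) h₃

theorem le_act_prod_and_le {l : List BraidGroup3} (hl : ∀ g ∈ l, g ∈ generatorConjugates)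
    (x : Cover) : x ≤ act l.prod x ∧ act l.prod x ≤ act ((braidDelta ^ 2) ^ l.length) x := by
  induction l generalizing x with
  | nil => simp
  | cons g t ih =>
    obtain ⟨h₁, h₂⟩ := ih (fun g hg => hl g (List.mem_cons_of_mem _ hg)) x
    obtain ⟨h₃, h₄⟩ := le_act_conj_and_lt (hl g List.mem_cons_self) (act t.prod x)
    rw [List.prod_cons, act_mul_apply, List.length_cons, pow_succ', act_mul_apply]
    exact ⟨h₁.trans h₃, h₄.le.trans ((act (braidDelta ^ 2)).monotone h₂)⟩

theorem le_act_pow_of_quasipositive {X : BraidGroup3} (hX : Quasipositive X) (k : ℕ)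
    (x : Cover) : x ≤ act (X ^ k) x := by
  obtain ⟨l, hl, hprod⟩ := Submonoid.exists_list_of_mem_closure (pow_mem hX k)
  rw [← hprod]
  exact (le_act_prod_and_le hl x).1

theorem act_pow_le_of_act_le {X : BraidGroup3} {x : Cover} {K : ℕ}
    (h : act X x ≤ act ((braidDelta ^ 2) ^ K) x) (m : ℕ) :
    act (X ^ m) x ≤ act ((braidDelta ^ 2) ^ (m * K)) x := by
  induction m with
  | zero => simp
  | succ m ih =>
    calc act (X ^ (m + 1)) x = act (X ^ m) (act X x) := by rw [pow_succ, act_mul_apply]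
      _ ≤ act (X ^ m) (act ((braidDelta ^ 2) ^ K) x) := (act _).monotone h
      _ = act ((braidDelta ^ 2) ^ K) (act (X ^ m) x) := act_delta_sq_pow_comm _ _ _
      _ ≤ act ((braidDelta ^ 2) ^ K) (act ((braidDelta ^ 2) ^ (m * K)) x) := (act _).monotone ih
      _ = act ((braidDelta ^ 2) ^ ((m + 1) * K)) x := by
        rw [← act_mul_apply, ← pow_add, add_mul, one_mul, add_comm]

theorem exists_le_act_delta_sq_pow (x y : Cover) : ∃ c : ℕ, x ≤ act ((braidDelta ^ 2) ^ c) y :=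
  ⟨(x.height - y.height).toNat + 1, (lt_of_height_lt (by
    rw [height_act_delta_sq_pow]; push_cast; omega)).le⟩

/-- The last conjugate `w⁻¹ σᵢ w` of a quasipositive factorization fixes a point, so at that
point the braid advances by at most `e - 1` half-turns. -/
theorem exists_height_act_pow_le {X : BraidGroup3} (hX : Quasipositive X) (hX1 : X ≠ 1)
    (x : Cover) :
    ∃ C : ℤ, ∀ m : ℕ, (act (X ^ m) x).height ≤ C + 4 * m * ((exponentSum X).toAdd - 1) := by
  obtain ⟨l, hl, hXl⟩ := Submonoid.exists_list_of_mem_closure hX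
  obtain rfl | ⟨l, g, rfl⟩ := l.eq_nil_or_concat
  · exact absurd (hXl.symm.trans List.prod_nil) hX1
  have hl' : ∀ h ∈ l, h ∈ generatorConjugates := fun h hh => hl h (by simp [hh])
  obtain ⟨w, i, rfl⟩ := hl g (by simp)
  set xs := act w⁻¹ (fixedPoint i)
  have hstep : act X xs ≤ act ((braidDelta ^ 2) ^ l.length) xs := by
    have hfix : act (w⁻¹ * sigma i * w) xs = xs := by simp [xs, act_sigma_fixedPoint]
    rw [← hXl, List.concat_eq_append, List.prod_append, List.prod_singleton, act_mul_apply, hfix]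
    exact (le_act_prod_and_le hl' xs).2
  obtain ⟨c, hc⟩ := exists_le_act_delta_sq_pow x xs
  refine ⟨xs.height + 4 * c, fun m => ?_⟩
  have hle := height_le_height <| calc
    act (X ^ m) x ≤ act (X ^ m) (act ((braidDelta ^ 2) ^ c) xs) := (act _).monotone hc
    _ = act ((braidDelta ^ 2) ^ c) (act (X ^ m) xs) := act_delta_sq_pow_comm _ _ _
    _ ≤ act ((braidDelta ^ 2) ^ c) (act ((braidDelta ^ 2) ^ (m * l.length)) xs) :=
      (act _).monotone (act_pow_le_of_act_le hstep m)
  have he : (exponentSum X).toAdd = l.length + 1 := by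
    rw [← hXl, toAdd_exponentSum_list_prod hl, List.length_concat, Nat.cast_succ]
  rw [height_act_delta_sq_pow, height_act_delta_sq_pow] at hle
  rw [he]
  push_cast at hle
  linarith

theorem nonpos_of_forall_mul_succ_le {a C : ℤ} (h : ∀ m : ℕ, a * (m + 1) ≤ C) : a ≤ 0 := by
  by_contra! ha
  have := h C.toNat
  nlinarith [Int.self_le_toNat C]

theorem bounds_of_height_act_pow {X : BraidGroup3} (hX : Quasipositive X) {s : ℤ} {y : Cover}
    (hy : ∀ m : ℕ, (act (X ^ (2 * (m + 1))) y).height = y.height + 4 * s * (m + 1) - 1) :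
    0 < s ∧ s < 2 * (exponentSum X).toAdd := by
  have h₀ : (act (X ^ 2) y).height = y.height + 4 * s - 1 := by simpa using hy 0
  have hs : 0 < s := by
    have := height_le_height (le_act_pow_of_quasipositive hX 2 y)
    omega
  have hX1 : X ≠ 1 := by
    rintro rfl
    simp only [one_pow, act_one_apply] at h₀
    omega
  obtain ⟨C, hC⟩ := exists_height_act_pow_le hX hX1 y
  have := nonpos_of_forall_mul_succ_le (a := 4 * (s - 2 * ((exponentSum X).toAdd - 1)))
    (C := C - y.height + 1) fun m => by
      have := hC (2 * (m + 1))
      rw [hy m] at this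
      push_cast at this
      linarith
  omega

theorem not_quasipositive_of_height_lt {X : BraidGroup3} {k : ℕ} {x : Cover}
    (h : (act (X ^ k) x).height < x.height) : ¬ Quasipositive X :=
  fun hX => (height_le_height (le_act_pow_of_quasipositive hX k x)).not_gt h

theorem not_quasipositive_Xbraid_of_length_le_one {p : ℤ} {as : List ℕ} (hp : p < 0)
    (hn : as.length ≤ 1) : ¬ Quasipositive (Xbraid p as) := by
  refine not_quasipositive_of_height_lt (k := 2) (x := fixedPoint 0) ?_
  rw [sq_Xbraid, act_mul_apply, height_act_delta_sq_zpow]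
  suffices h : (act ((if Even p then altFactors (sigma 0) (sigma 1) as
      else altFactors (sigma 1) (sigma 0) as) * altFactors (sigma 0) (sigma 1) as)
        (fixedPoint 0)).height ≤ (fixedPoint 0).height + 1 by omega
  match as, hn with
  | [], _ => simp [altFactors]
  | [a], _ =>
    simp only [altFactors, mul_one, act_mul_apply, act_sigma_pow_fixedPoint]
    split_ifs
    · rw [act_sigma_pow_fixedPoint]; omega
    · rw [height_act_sigma_pow 1 a _ (by decide)]
      have : ((sinkOct 1 - (fixedPoint 0).height) % 4) = 1 := by decide
      omega

theorem not_quasipositive_Xbraid_one_one {p : ℤ} (hp : p < 0) (he : Even p) :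
    ¬ Quasipositive (Xbraid p [1, 1]) := by
  obtain ⟨q, rfl⟩ := he
  have hX : Xbraid (q + q) [1, 1] = (braidDelta ^ 2) ^ q * (sigma 0 * sigma 1) := by
    rw [Xbraid, ← two_mul, zpow_mul]
    simp only [zpow_ofNat, altFactors, pow_one, mul_one]
  refine not_quasipositive_of_height_lt (k := 3) (x := fixedPoint 0) ?_
  rw [hX, ((delta_sq_commute _).zpow_left q).mul_pow, sigma_mul_sigma_pow_three, ← zpow_natCast,
    ← zpow_mul, ← zpow_add_one, height_act_delta_sq_zpow]
  omega

end BraidCover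

theorem statement17_general (p : ℤ) (as : List ℕ)
    (hred : as.length ≤ 1 ∨ (as = [1, 1] ∧ Even p) ∨
      ((as.length : ℤ) % 2 = p % 2 ∧ ∀ a ∈ as, 2 ≤ a))
    (hp : p < 0) (hqp : Quasipositive (Xbraid p as)) :
    0 < p + (as.length : ℤ) ∧
      p + (as.length : ℤ) < 2 * (3 * p + (as.sum : ℤ)) := by
  rcases hred with hn | ⟨rfl, hpe⟩ | ⟨hpar, h2⟩
  · exact absurd hqp (BraidCover.not_quasipositive_Xbraid_of_length_le_one hp hn)
  · exact absurd hqp (BraidCover.not_quasipositive_Xbraid_one_one hp hpe)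
  rcases eq_or_ne as [] with rfl | hne
  · exact absurd hqp (BraidCover.not_quasipositive_Xbraid_of_length_le_one hp (by simp))
  have hpar' : Even as.length ↔ Even p := by
    rw [← Int.even_coe_nat, Int.even_iff, Int.even_iff]
    omega
  obtain ⟨y, hy⟩ := BraidCover.exists_height_act_Xbraid_pow hpar' hne h2
  rw [← BraidGroup3.toAdd_exponentSum_Xbraid]
  exact BraidCover.bounds_of_height_act_pow hqp hy

/-- **Proposition 6.5(b)** (Orevkov): if `(p, a⃗)` is reduced (i.e. `n ≤ 1`, or
`a⃗ = (1,1)` with `p` even, or `n ≡ p (mod 2)` with all `a_i ≥ 2`), `p < 0`, and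
`X(p, a⃗)` is quasipositive, then `0 < p + n < 2·e(X(p, a⃗))`, where
`e(X(p, a⃗)) = 3p + a₁ + ⋯ + a_n`. -/
theorem statement17 (p : ℤ) (as : List ℕ) (hpos : ∀ a ∈ as, 0 < a)
    (hred : as.length ≤ 1 ∨ (as = [1, 1] ∧ Even p) ∨
      ((as.length : ℤ) % 2 = p % 2 ∧ ∀ a ∈ as, 2 ≤ a))
    (hp : p < 0) (hqp : Quasipositive (Xbraid p as)) :
    0 < p + (as.length : ℤ) ∧
      p + (as.length : ℤ) < 2 * (3 * p + (as.sum : ℤ)) :=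
  statement17_general p as hred hp hqp
end
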